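/- arXiv:2011.02761 — 2 statements merged into one kernel-verified Lean document; each statement's English description precedes it below -/
import Mathlib

section
/- Let A be a nonnegative real s-by-t matrix. Then there exists a nonnegative matrix B with B_{ij} <= A_{ij} for all i, j, such that every row sum of B is an integer, every column sum of B is an integer, and the total decrease sum_{i,j} (A_{ij} - B_{ij}) is at most C * (s' + t') for an absolute constant C, where s' and t' are the number of nonzero rows and nonzero columns of A respectively. -/
set_option maxHeartbeats 1600000

open scoped Classical
open Finset

namespace MatRound

variable {s t : ℕ}

noncomputable def rowsF (A : Fin s → Fin t → ℝ) : Finset (Fin s) :=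
  univ.filter fun i => ∃ j, A i j ≠ 0

noncomputable def colsF (A : Fin s → Fin t → ℝ) : Finset (Fin t) :=
  univ.filter fun j => ∃ i, A i j ≠ 0

lemma extract_of_prime (A : Fin s → Fin t → ℝ) (hA : ∀ i j, 0 ≤ A i j)
    (p : ℕ) (hp : p.Prime)
    (hcount : ((rowsF A).card + (colsF A).card) * (p - 1)
        < ∑ e : Fin s × Fin t, ⌊(p : ℝ) * A e.1 e.2⌋₊) :
    ∃ U : Fin s → Fin t → ℝ,
      (∀ i j, 0 ≤ U i j ∧ U i j ≤ A i j) ∧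
      (∀ i, ∃ z : ℤ, ∑ j, U i j = (z : ℝ)) ∧
      (∀ j, ∃ z : ℤ, ∑ i, U i j = (z : ℝ)) ∧
      1 ≤ ∑ i, ∑ j, U i j := by
  haveI : Fact p.Prime := ⟨hp⟩
  have hp2 : 2 ≤ p := hp.two_le
  have hppos : (0 : ℝ) < p := by positivity
  set c : Fin s × Fin t → ℕ := fun e => ⌊(p : ℝ) * A e.1 e.2⌋₊ with hc
  -- the variable type
  let V := Σ e : Fin s × Fin t, Fin (c e)
  have hcardV : Fintype.card V = ∑ e : Fin s × Fin t, c e := by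
    simp [V]
  -- the polynomial system
  let Frow : Fin s → MvPolynomial V (ZMod p) := fun i =>
    ∑ v : V, if v.1.1 = i then (MvPolynomial.X v) ^ (p - 1) else (0 : MvPolynomial V (ZMod p))
  let Fcol : Fin t → MvPolynomial V (ZMod p) := fun j =>
    ∑ v : V, if v.1.2 = j then (MvPolynomial.X v) ^ (p - 1) else (0 : MvPolynomial V (ZMod p))
  let F : Fin s ⊕ Fin t → MvPolynomial V (ZMod p) := Sum.elim Frow Fcol
  have hdegaux : ∀ (P : V → Prop) (_ : DecidablePred P),
      (∑ v : V, if P v then (MvPolynomial.X v) ^ (p - 1)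
        else (0 : MvPolynomial V (ZMod p))).totalDegree ≤ p - 1 := by
    intro P inst
    refine le_trans (MvPolynomial.totalDegree_finset_sum _ _) ?_
    refine Finset.sup_le fun v _ => ?_
    split_ifs
    · refine le_trans (MvPolynomial.totalDegree_pow _ _) ?_
      simp [MvPolynomial.totalDegree_X]
    · simp
  have hdeg : ∀ ℓ, (F ℓ).totalDegree ≤ p - 1 := by
    rintro (i | j)
    · exact hdegaux _ _
    · exact hdegaux _ _
  set eqs : Finset (Fin s ⊕ Fin t) := (rowsF A).disjSum (colsF A) with heqs
  have hsumdeg : (∑ ℓ ∈ eqs, (F ℓ).totalDegree) < Fintype.card V := by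
    calc (∑ ℓ ∈ eqs, (F ℓ).totalDegree) ≤ eqs.card • (p - 1) :=
          Finset.sum_le_card_nsmul _ _ (p - 1) (fun ℓ _ => hdeg ℓ)
      _ = ((rowsF A).card + (colsF A).card) * (p - 1) := by
          rw [smul_eq_mul, heqs, Finset.card_disjSum]
      _ < Fintype.card V := by rw [hcardV]; exact hcount
  have hdvd := char_dvd_card_solutions_of_sum_lt (K := ZMod p) (σ := V) p hsumdeg
  -- zero is a solution
  have haux : ∀ (P : V → Prop) (_ : DecidablePred P),
      MvPolynomial.eval (0 : V → ZMod p)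
        (∑ v : V, if P v then (MvPolynomial.X v) ^ (p - 1)
          else (0 : MvPolynomial V (ZMod p))) = 0 := by
    intro P inst
    rw [map_sum]
    refine Finset.sum_eq_zero fun v _ => ?_
    split_ifs
    · rw [map_pow, MvPolynomial.eval_X]
      exact zero_pow (by omega)
    · simp
  have h0 : ∀ ℓ ∈ eqs, MvPolynomial.eval (0 : V → ZMod p) (F ℓ) = 0 := by
    rintro (i | j) _
    · exact haux _ _
    · exact haux _ _
  have hdvd' : p ∣ Fintype.card { x : V → ZMod p // ∀ ℓ ∈ eqs, MvPolynomial.eval x (F ℓ) = 0 } := by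
    convert hdvd using 2
  have hcardpos : 0 < Fintype.card { x : V → ZMod p // ∀ ℓ ∈ eqs, MvPolynomial.eval x (F ℓ) = 0 } :=
    Fintype.card_pos_iff.mpr ⟨⟨0, h0⟩⟩
  have h2card : 1 < Fintype.card { x : V → ZMod p // ∀ ℓ ∈ eqs, MvPolynomial.eval x (F ℓ) = 0 } := by
    have := Nat.le_of_dvd hcardpos hdvd'
    omega
  obtain ⟨y, hy⟩ := Fintype.exists_ne_of_one_lt_card h2card ⟨0, h0⟩
  have hx : y.1 ≠ 0 := fun h => hy (Subtype.ext h)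
  set x : V → ZMod p := y.1 with hxdef
  -- the counting function
  set m : Fin s → Fin t → ℕ := fun i j =>
    ∑ k : Fin (c (i, j)), if x ⟨(i, j), k⟩ ≠ 0 then 1 else 0 with hm
  -- zero entries give zero counts
  have hmzero : ∀ i j, A i j = 0 → m i j = 0 := by
    intro i j hij
    have hcij : c (i, j) = 0 := by simp [hc, hij]
    haveI : IsEmpty (Fin (c (i, j))) := by rw [hcij]; infer_instance
    simp [hm]
  -- evaluation computation
  have heval : ∀ (P : V → Prop) (_ : DecidablePred P),
      MvPolynomial.eval x (∑ v : V, if P v then (MvPolynomial.X v) ^ (p - 1)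
          else (0 : MvPolynomial V (ZMod p)))
        = ∑ v : V, if P v ∧ x v ≠ 0 then (1 : ZMod p) else 0 := by
    intro P inst
    rw [map_sum]
    refine Finset.sum_congr rfl fun v _ => ?_
    by_cases hPv : P v
    · rw [if_pos hPv, map_pow, MvPolynomial.eval_X]
      by_cases hxv : x v = 0
      · rw [hxv, zero_pow (by omega), if_neg (by simp [hxv])]
      · rw [ZMod.pow_card_sub_one_eq_one hxv, if_pos ⟨hPv, hxv⟩]
    · rw [if_neg hPv, if_neg (by simp [hPv]), map_zero]
  -- row margins are divisible by p
  have hrow : ∀ i : Fin s, p ∣ ∑ j, m i j := by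
    intro i
    by_cases hi : i ∈ rowsF A
    · have heq : MvPolynomial.eval x (F (Sum.inl i)) = 0 :=
        y.2 (Sum.inl i) (Finset.inl_mem_disjSum.mpr hi)
      have heq2 : (∑ v : V, if v.1.1 = i ∧ x v ≠ 0 then (1 : ZMod p) else 0) = 0 := by
        rw [← heval (fun v => v.1.1 = i) _]
        exact heq
      have hsig : (∑ v : V, if v.1.1 = i ∧ x v ≠ 0 then (1 : ZMod p) else 0)
          = ∑ j, ((m i j : ℕ) : ZMod p) := by
        rw [← Finset.univ_sigma_univ, Finset.sum_sigma, Fintype.sum_prod_type]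
        rw [Finset.sum_eq_single_of_mem i (Finset.mem_univ i) ?_]
        · refine Finset.sum_congr rfl fun b _ => ?_
          rw [hm]
          push_cast
          refine Finset.sum_congr rfl fun k _ => ?_
          by_cases hxk : x ⟨(i, b), k⟩ = 0 <;> simp [hxk]
        · intro a _ ha
          refine Finset.sum_eq_zero fun b _ => Finset.sum_eq_zero fun k _ => ?_
          simp [ha]
      have : ((∑ j, m i j : ℕ) : ZMod p) = 0 := by
        rw [Nat.cast_sum, ← hsig, heq2]
      exact (ZMod.natCast_eq_zero_iff _ p).mp this
    · have hAi : ∀ j, A i j = 0 := by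
        intro j
        by_contra hne
        refine hi ?_
        simp only [rowsF, Finset.mem_filter]
        exact ⟨Finset.mem_univ i, ⟨j, hne⟩⟩
      have hz : ∀ j, m i j = 0 := fun j => hmzero i j (hAi j)
      simp [hz]
  -- column margins are divisible by p
  have hcol : ∀ j : Fin t, p ∣ ∑ i, m i j := by
    intro j
    by_cases hj : j ∈ colsF A
    · have heq : MvPolynomial.eval x (F (Sum.inr j)) = 0 :=
        y.2 (Sum.inr j) (Finset.inr_mem_disjSum.mpr hj)
      have heq2 : (∑ v : V, if v.1.2 = j ∧ x v ≠ 0 then (1 : ZMod p) else 0) = 0 := by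
        rw [← heval (fun v => v.1.2 = j) _]
        exact heq
      have hsig : (∑ v : V, if v.1.2 = j ∧ x v ≠ 0 then (1 : ZMod p) else 0)
          = ∑ i, ((m i j : ℕ) : ZMod p) := by
        rw [← Finset.univ_sigma_univ, Finset.sum_sigma, Fintype.sum_prod_type]
        refine Finset.sum_congr rfl fun a _ => ?_
        rw [Finset.sum_eq_single_of_mem j (Finset.mem_univ j) ?_]
        · rw [hm]
          push_cast
          refine Finset.sum_congr rfl fun k _ => ?_
          by_cases hxk : x ⟨(a, j), k⟩ = 0 <;> simp [hxk]
        · intro b _ hb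
          refine Finset.sum_eq_zero fun k _ => ?_
          simp [hb]
      have : ((∑ i, m i j : ℕ) : ZMod p) = 0 := by
        rw [Nat.cast_sum, ← hsig, heq2]
      exact (ZMod.natCast_eq_zero_iff _ p).mp this
    · have hAj : ∀ i, A i j = 0 := by
        intro i
        by_contra hne
        refine hj ?_
        simp only [colsF, Finset.mem_filter]
        exact ⟨Finset.mem_univ j, ⟨i, hne⟩⟩
      have hz : ∀ i, m i j = 0 := fun i => hmzero i j (hAj i)
      simp [hz]
  -- the minorant
  refine ⟨fun i j => (m i j : ℝ) / p, ?_, ?_, ?_, ?_⟩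
  · intro i j
    constructor
    · exact div_nonneg (Nat.cast_nonneg _) (le_of_lt hppos)
    · rw [div_le_iff₀ hppos]
      have h1 : (m i j : ℝ) ≤ (c (i, j) : ℝ) := by
        have : m i j ≤ c (i, j) := by
          rw [hm]
          calc (∑ k : Fin (c (i, j)), if x ⟨(i, j), k⟩ ≠ 0 then 1 else 0)
              ≤ ∑ _k : Fin (c (i, j)), 1 := by
                refine Finset.sum_le_sum fun k _ => ?_
                split_ifs <;> omega
            _ = c (i, j) := by simp
        exact_mod_cast this
      refine le_trans h1 ?_
      rw [mul_comm]
      exact Nat.floor_le (mul_nonneg (le_of_lt hppos) (hA i j))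
  · intro i
    obtain ⟨z, hz⟩ := hrow i
    refine ⟨(z : ℤ), ?_⟩
    rw [← Finset.sum_div]
    rw [show (∑ j, (m i j : ℝ)) = ((∑ j, m i j : ℕ) : ℝ) by push_cast; ring]
    rw [hz]
    push_cast
    field_simp
  · intro j
    obtain ⟨z, hz⟩ := hcol j
    refine ⟨(z : ℤ), ?_⟩
    rw [← Finset.sum_div]
    rw [show (∑ i, (m i j : ℝ)) = ((∑ i, m i j : ℕ) : ℝ) by push_cast; ring]
    rw [hz]
    push_cast
    field_simp
  · -- total at least 1
    obtain ⟨v₀, hv₀⟩ := Function.ne_iff.mp hx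
    obtain ⟨⟨i₀, j₀⟩, k₀⟩ := v₀
    have hv₀' : x ⟨(i₀, j₀), k₀⟩ ≠ 0 := by simpa using hv₀
    have hm1 : 1 ≤ m i₀ j₀ := by
      show 1 ≤ ∑ k : Fin (c (i₀, j₀)), if x ⟨(i₀, j₀), k⟩ ≠ 0 then 1 else 0
      have h1 : (1 : ℕ) ≤ if x ⟨(i₀, j₀), k₀⟩ ≠ 0 then 1 else 0 := by simp [hv₀']
      exact le_trans h1 (Finset.single_le_sum
        (f := fun k : Fin (c (i₀, j₀)) => if x ⟨(i₀, j₀), k⟩ ≠ 0 then 1 else 0)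
        (fun k _ => Nat.zero_le _) (Finset.mem_univ k₀))
    have hs1 : 1 ≤ ∑ j, m i₀ j :=
      le_trans hm1 (Finset.single_le_sum (fun j _ => Nat.zero_le _) (Finset.mem_univ j₀))
    obtain ⟨z, hz⟩ := hrow i₀
    have hz1 : 1 ≤ z := by
      rcases Nat.eq_zero_or_pos z with h | h
      · rw [h, Nat.mul_zero] at hz; omega
      · exact h
    have hrowsum : (1 : ℝ) ≤ ∑ j, (m i₀ j : ℝ) / p := by
      have heqz : (∑ j, (m i₀ j : ℝ) / p) = (z : ℝ) := by
        rw [← Finset.sum_div]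
        rw [show (∑ j, (m i₀ j : ℝ)) = ((∑ j, m i₀ j : ℕ) : ℝ) by push_cast; ring]
        rw [hz]
        push_cast
        rw [mul_comm, mul_div_assoc, div_self (ne_of_gt hppos), mul_one]
      rw [heqz]
      exact_mod_cast hz1
    refine le_trans hrowsum ?_
    refine Finset.single_le_sum (f := fun i => ∑ j, (m i j : ℝ) / p) ?_ (Finset.mem_univ i₀)
    intro i _
    positivity

lemma extract (A : Fin s → Fin t → ℝ) (hA : ∀ i j, 0 ≤ A i j)
    (hbig : (((rowsF A).card : ℝ) + ((colsF A).card : ℝ)) < ∑ i, ∑ j, A i j) :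
    ∃ U : Fin s → Fin t → ℝ,
      (∀ i j, 0 ≤ U i j ∧ U i j ≤ A i j) ∧
      (∀ i, ∃ z : ℤ, ∑ j, U i j = (z : ℝ)) ∧
      (∀ j, ∃ z : ℤ, ∑ i, U i j = (z : ℝ)) ∧
      1 ≤ ∑ i, ∑ j, U i j := by
  set M : ℕ := (rowsF A).card + (colsF A).card with hM
  set T : ℝ := ∑ i, ∑ j, A i j with hT
  have hMT : (M : ℝ) < T := by rw [hM]; push_cast; exact hbig
  have hTpos : (0 : ℝ) < T - M := by linarith
  obtain ⟨n₀, hn₀⟩ := exists_nat_ge (((s * t : ℕ) : ℝ) / (T - (M : ℝ)))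
  obtain ⟨p, hpn, hp⟩ := Nat.exists_infinite_primes n₀
  refine extract_of_prime A hA p hp ?_
  have hTprod : (∑ e : Fin s × Fin t, A e.1 e.2) = T := by
    rw [hT, Fintype.sum_prod_type]
  haveI hne : Nonempty (Fin s × Fin t) := by
    by_contra h
    rw [not_nonempty_iff] at h
    have h0 : T = 0 := by
      rw [← hTprod]
      simp
    have : (0 : ℝ) ≤ (M : ℝ) := Nat.cast_nonneg _
    linarith
  have hst : ((s * t : ℕ) : ℝ) ≤ (p : ℝ) * (T - M) := by
    have hp' : ((n₀ : ℝ)) ≤ (p : ℝ) := by exact_mod_cast hpn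
    have := (div_le_iff₀ hTpos).mp hn₀
    nlinarith [hTpos]
  have hfloor : ∀ e : Fin s × Fin t, (p : ℝ) * A e.1 e.2 - 1 < (⌊(p : ℝ) * A e.1 e.2⌋₊ : ℝ) :=
    fun e => Nat.sub_one_lt_floor _
  have h2 : (∑ e : Fin s × Fin t, ((p : ℝ) * A e.1 e.2 - 1))
      < ∑ e : Fin s × Fin t, (⌊(p : ℝ) * A e.1 e.2⌋₊ : ℝ) :=
    Finset.sum_lt_sum_of_nonempty Finset.univ_nonempty fun e _ => hfloor e
  have h3 : (∑ e : Fin s × Fin t, ((p : ℝ) * A e.1 e.2 - 1))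
      = (p : ℝ) * T - ((s * t : ℕ) : ℝ) := by
    rw [Finset.sum_sub_distrib, ← Finset.mul_sum, hTprod]
    simp [Finset.card_univ]
  have key : ((M * (p - 1) : ℕ) : ℝ)
      < ((∑ e : Fin s × Fin t, ⌊(p : ℝ) * A e.1 e.2⌋₊ : ℕ) : ℝ) := by
    have hp1 : ((p - 1 : ℕ) : ℝ) = (p : ℝ) - 1 := by
      rw [Nat.cast_sub hp.one_le, Nat.cast_one]
    have hcast : ((M * (p - 1) : ℕ) : ℝ) = (M : ℝ) * ((p : ℝ) - 1) := by
      rw [Nat.cast_mul, hp1]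
    rw [hcast]
    have hsum : ((∑ e : Fin s × Fin t, ⌊(p : ℝ) * A e.1 e.2⌋₊ : ℕ) : ℝ)
        = ∑ e : Fin s × Fin t, (⌊(p : ℝ) * A e.1 e.2⌋₊ : ℝ) := by push_cast; rfl
    rw [hsum]
    have hM0 : (0 : ℝ) ≤ (M : ℝ) := Nat.cast_nonneg _
    nlinarith [h2, h3, hst]
  exact_mod_cast key

lemma main : ∀ (N : ℕ) (s t : ℕ) (A : Fin s → Fin t → ℝ), (∀ i j, 0 ≤ A i j) →
    (∑ i, ∑ j, A i j) ≤ (N : ℝ) →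
    ∃ B : Fin s → Fin t → ℝ,
      (∀ i j, 0 ≤ B i j ∧ B i j ≤ A i j) ∧
      (∀ i, ∃ z : ℤ, ∑ j, B i j = (z : ℝ)) ∧
      (∀ j, ∃ z : ℤ, ∑ i, B i j = (z : ℝ)) ∧
      ∑ i, ∑ j, (A i j - B i j) ≤ ((rowsF A).card : ℝ) + ((colsF A).card : ℝ) := by
  intro N
  induction N with
  | zero =>
      intro s t A hA hT
      refine ⟨fun _ _ => 0, fun i j => ⟨le_refl _, hA i j⟩,
        fun i => ⟨0, by simp⟩, fun j => ⟨0, by simp⟩, ?_⟩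
      simp only [sub_zero]
      refine le_trans hT ?_
      push_cast
      positivity
  | succ N ih =>
      intro s t A hA hT
      by_cases hc : (∑ i, ∑ j, A i j) ≤ ((rowsF A).card : ℝ) + ((colsF A).card : ℝ)
      · refine ⟨fun _ _ => 0, fun i j => ⟨le_refl _, hA i j⟩,
          fun i => ⟨0, by simp⟩, fun j => ⟨0, by simp⟩, ?_⟩
        simpa only [sub_zero] using hc
      · push_neg at hc
        obtain ⟨U, hU1, hU2, hU3, hU4⟩ := extract A hA hc
        set D : Fin s → Fin t → ℝ := fun i j => A i j - U i j with hD
        have hD0 : ∀ i j, 0 ≤ D i j := fun i j => sub_nonneg.mpr (hU1 i j).2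
        have hTD : (∑ i, ∑ j, D i j) ≤ (N : ℝ) := by
          have hsplit : (∑ i, ∑ j, D i j)
              = (∑ i, ∑ j, A i j) - (∑ i, ∑ j, U i j) := by
            rw [hD, ← Finset.sum_sub_distrib]
            refine Finset.sum_congr rfl fun i _ => ?_
            rw [← Finset.sum_sub_distrib]
          rw [hsplit]
          push_cast at hT
          linarith
        obtain ⟨B', hB1, hB2, hB3, hB4⟩ := ih s t D hD0 hTD
        refine ⟨fun i j => U i j + B' i j, ?_, ?_, ?_, ?_⟩
        · intro i j
          refine ⟨add_nonneg (hU1 i j).1 (hB1 i j).1, ?_⟩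
          show U i j + B' i j ≤ A i j
          have h1 := (hB1 i j).2
          have h2 : D i j = A i j - U i j := by rw [hD]
          rw [h2] at h1
          linarith
        · intro i
          obtain ⟨z1, h1⟩ := hU2 i
          obtain ⟨z2, h2⟩ := hB2 i
          refine ⟨z1 + z2, ?_⟩
          show (∑ j, (U i j + B' i j)) = ((z1 + z2 : ℤ) : ℝ)
          rw [Finset.sum_add_distrib, h1, h2]
          push_cast
          ring
        · intro j
          obtain ⟨z1, h1⟩ := hU3 j
          obtain ⟨z2, h2⟩ := hB3 j
          refine ⟨z1 + z2, ?_⟩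
          show (∑ i, (U i j + B' i j)) = ((z1 + z2 : ℤ) : ℝ)
          rw [Finset.sum_add_distrib, h1, h2]
          push_cast
          ring
        · show (∑ i, ∑ j, (A i j - (U i j + B' i j)))
              ≤ ((rowsF A).card : ℝ) + ((colsF A).card : ℝ)
          have hdef : (∑ i, ∑ j, (A i j - (U i j + B' i j)))
              = ∑ i, ∑ j, (D i j - B' i j) := by
            refine Finset.sum_congr rfl fun i _ => Finset.sum_congr rfl fun j _ => ?_
            rw [hD]
            ring
          rw [hdef]
          refine le_trans hB4 ?_
          have hrsub : rowsF D ⊆ rowsF A := by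
            intro i hi
            simp only [rowsF, Finset.mem_filter] at hi ⊢
            obtain ⟨-, j, hj⟩ := hi
            refine ⟨Finset.mem_univ i, j, fun hAij => ?_⟩
            have hU0 : U i j = 0 :=
              le_antisymm (le_trans (hU1 i j).2 (le_of_eq hAij)) (hU1 i j).1
            exact hj (by rw [hD]; simp [hAij, hU0])
          have hcsub : colsF D ⊆ colsF A := by
            intro j hj
            simp only [colsF, Finset.mem_filter] at hj ⊢
            obtain ⟨-, i, hi⟩ := hj
            refine ⟨Finset.mem_univ j, i, fun hAij => ?_⟩
            have hU0 : U i j = 0 :=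
              le_antisymm (le_trans (hU1 i j).2 (le_of_eq hAij)) (hU1 i j).1
            exact hi (by rw [hD]; simp [hAij, hU0])
          have h1 : ((rowsF D).card : ℝ) ≤ ((rowsF A).card : ℝ) := by
            exact_mod_cast Finset.card_le_card hrsub
          have h2 : ((colsF D).card : ℝ) ≤ ((colsF A).card : ℝ) := by
            exact_mod_cast Finset.card_le_card hcsub
          linarith

end MatRound

/-- Matrix rounding: any nonnegative real `s × t` matrix `A` can be rounded down to a
nonnegative matrix `B ≤ A` with integral row and column sums so that the total decrease
is at most `C·(s' + t')` for an absolute constant `C`, where `s'` and `t'` are the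
numbers of nonzero rows and columns of `A`. -/
theorem matrix_rounding :
    ∃ C : ℝ, 0 < C ∧
      ∀ (s t : ℕ) (A : Fin s → Fin t → ℝ), (∀ i j, 0 ≤ A i j) →
        ∃ B : Fin s → Fin t → ℝ,
          (∀ i j, 0 ≤ B i j ∧ B i j ≤ A i j) ∧
          (∀ i, ∃ z : ℤ, ∑ j, B i j = (z : ℝ)) ∧
          (∀ j, ∃ z : ℤ, ∑ i, B i j = (z : ℝ)) ∧
          ∑ i, ∑ j, (A i j - B i j)
            ≤ C * (((Finset.univ.filter (fun i => ∃ j, A i j ≠ 0)).card : ℝ)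
              + ((Finset.univ.filter (fun j => ∃ i, A i j ≠ 0)).card : ℝ)) := by
  refine ⟨1, one_pos, ?_⟩
  intro s t A hA
  obtain ⟨B, h1, h2, h3, h4⟩ :=
    MatRound.main ⌈∑ i, ∑ j, A i j⌉₊ s t A hA (Nat.le_ceil _)
  refine ⟨B, h1, h2, h3, ?_⟩
  rw [one_mul]
  exact h4
end

section
/- Let G = (V, E) be a multigraph with minimum cut value c > 0, and let alpha >= 1 be a constant. Then the number of cuts (S, S^c) with |E(S, S^c)| <= alpha * c is at most |V|^{2*alpha}. -/
/-!
Encode a partition of `V` (a contraction of the graph) by a labelling `π` whose fibres are the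
parts, and let `A(π)` be the cuts of size at most `α c` that are unions of parts. If `π` has
`k ≥ 2` parts, each part is a cut, so `m ≥ k c / 2` edges cross between parts. A cut in `A(π)`
avoids at least `m - α c` of them, and a cut avoiding a crossing edge `e` lies in `A(π / e)`,
where `π / e` has `k - 1` parts. Double counting pairs (cut, avoided edge) gives
`|A(π)| (m - α c) ≤ m · max_e |A(π / e)|`, so a bound for `k - 1` parts grows by at most a
factor `k / (k - 2α)`: the deterministic form of Karger's contraction argument. With
`r = ⌈2α⌉` and `γ = r - 2α`, the function `2^(r-1) C(k, r) / (k - r + 1)^γ` starts at the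
trivial bound `2^(r-1)` for `k = r`, absorbs each factor by weighted AM-GM, and at `k = |V|` is
at most `|V|^(2α)`.
-/
open scoped Classical

/-- The edges of a finite multigraph crossing a vertex cut `S`. -/
def cutEdges {V E : Type} [Fintype E] [DecidableEq V]
    (ends : E → V × V) (S : Finset V) : Finset E :=
  Finset.univ.filter (fun e =>
    ((ends e).1 ∈ S ∧ (ends e).2 ∉ S) ∨ ((ends e).1 ∉ S ∧ (ends e).2 ∈ S))

open Finset

section Contraction

variable {V E ι : Type}

def IsSaturated (π : V → ι) (S : Finset V) : Prop :=
  ∀ u v, π u = π v → (u ∈ S ↔ v ∈ S)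

def crossingEdges [Fintype E] [DecidableEq ι] (ends : E → V × V) (π : V → ι) : Finset E :=
  univ.filter fun e => π (ends e).1 ≠ π (ends e).2

def contract [DecidableEq ι] (π : V → ι) (a b : V) : V → ι :=
  fun v => if π v = π b then π a else π v

lemma isSaturated_id (S : Finset V) : IsSaturated id S := by
  rintro u v rfl
  rfl

lemma isSaturated_fiber [Fintype V] [DecidableEq ι] (π : V → ι) (x : ι) :
    IsSaturated π (univ.filter fun v => π v = x) := by
  intro u v huv
  simp only [mem_filter, mem_univ, true_and, huv]

lemma IsSaturated.mem_iff_mem_image [DecidableEq ι] {π : V → ι} {S : Finset V}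
    (hS : IsSaturated π S) (v : V) :
    v ∈ S ↔ π v ∈ S.image π := by
  refine ⟨mem_image_of_mem π, fun h => ?_⟩
  obtain ⟨u, hu, huv⟩ := mem_image.1 h
  exact (hS u v huv).1 hu

lemma IsSaturated.contract [DecidableEq ι] {π : V → ι} {S : Finset V} {a b : V}
    (hS : IsSaturated π S) (hab : a ∈ S ↔ b ∈ S) : IsSaturated (contract π a b) S := by
  intro u v huv
  unfold _root_.contract at huv
  split_ifs at huv with hu hv hv
  · exact (hS u b hu).trans (hS v b hv).symm
  · exact (hS u b hu).trans (hab.symm.trans (hS a v huv))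
  · exact (hS u a huv).trans (hab.trans (hS v b hv).symm)
  · exact hS u v huv

lemma image_contract [Fintype V] [DecidableEq ι] {π : V → ι} {a b : V} (hab : π a ≠ π b) :
    univ.image (contract π a b) = (univ.image π).erase (π b) := by
  ext x
  simp only [contract, mem_image, mem_univ, true_and, mem_erase]
  constructor
  · rintro ⟨v, rfl⟩
    split_ifs with h
    · exact ⟨hab, a, rfl⟩
    · exact ⟨h, v, rfl⟩
  · rintro ⟨hx, v, rfl⟩
    exact ⟨v, if_neg hx⟩

lemma card_image_contract [Fintype V] [DecidableEq ι] {π : V → ι} {a b : V} (hab : π a ≠ π b) :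
    #(univ.image (contract π a b)) = #(univ.image π) - 1 := by
  rw [image_contract hab, card_erase_of_mem (mem_image_of_mem π (mem_univ b))]

lemma card_filter_isSaturated_le_two_pow [Fintype V] [DecidableEq ι] (π : V → ι) (v₀ : V)
    (F : Finset (Finset V)) (hF : ∀ S ∈ F, v₀ ∈ S ∧ IsSaturated π S) :
    #F ≤ 2 ^ (#(univ.image π) - 1) := by
  calc #F ≤ #((univ.image π).erase (π v₀)).powerset := by
        refine card_le_card_of_injOn (fun S => (S.image π).erase (π v₀)) ?_ ?_
        · intro S _
          exact mem_powerset.2 (erase_subset_erase _ (image_subset_image (subset_univ S)))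
        · intro S hS T hT hST
          obtain ⟨hv₀S, hS⟩ := hF S hS
          obtain ⟨hv₀T, hT⟩ := hF T hT
          have himage : S.image π = T.image π := by
            rw [← insert_erase (mem_image_of_mem π hv₀S), ← insert_erase (mem_image_of_mem π hv₀T)]
            exact congrArg (insert (π v₀)) hST
          ext v
          rw [hS.mem_iff_mem_image, hT.mem_iff_mem_image, himage]
    _ = 2 ^ (#(univ.image π) - 1) := by
        rw [card_powerset, card_erase_of_mem (mem_image_of_mem π (mem_univ v₀))]

lemma notMem_cutEdges_iff [Fintype E] [DecidableEq V] (ends : E → V × V) (S : Finset V) (e : E) :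
    e ∉ cutEdges ends S ↔ ((ends e).1 ∈ S ↔ (ends e).2 ∈ S) := by
  simp only [cutEdges, mem_filter, mem_univ, true_and]
  tauto

lemma IsSaturated.cutEdges_subset [Fintype E] [DecidableEq V] [DecidableEq ι] (ends : E → V × V)
    {π : V → ι} {S : Finset V} (hS : IsSaturated π S) : cutEdges ends S ⊆ crossingEdges ends π := by
  intro e he
  simp only [crossingEdges, mem_filter, mem_univ, true_and]
  exact fun h => (notMem_cutEdges_iff ends S e).2 (hS _ _ h) he

lemma card_image_mul_le_card_crossingEdges_mul_two [Fintype V] [Fintype E] [DecidableEq V]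
    [DecidableEq ι] (ends : E → V × V) {c : ℕ}
    (hmin : ∀ S : Finset V, S.Nonempty → S ≠ univ → c ≤ #(cutEdges ends S))
    (π : V → ι) (hk : 2 ≤ #(univ.image π)) :
    #(univ.image π) * c ≤ #(crossingEdges ends π) * 2 := by
  let fiber (x : ι) : Finset V := univ.filter fun v => π v = x
  refine card_mul_le_card_mul (fun x e => e ∈ cutEdges ends (fiber x)) ?_ ?_
  · intro x hx
    obtain ⟨u, -, rfl⟩ := mem_image.1 hx
    obtain ⟨y, hy, hyx⟩ := exists_mem_ne hk (π u)
    obtain ⟨w, -, rfl⟩ := mem_image.1 hy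
    have hfiber : fiber (π u) ≠ univ := fun h => by
      have hw : w ∈ fiber (π u) := h ▸ mem_univ w
      exact hyx (mem_filter.1 hw).2
    calc c ≤ #(cutEdges ends (fiber (π u))) := hmin _ ⟨u, by simp [fiber]⟩ hfiber
      _ = #((crossingEdges ends π).bipartiteAbove _ (π u)) := by
        rw [bipartiteAbove, filter_mem_eq_inter, inter_eq_right.2
          ((isSaturated_fiber π (π u)).cutEdges_subset ends)]
  · intro e _
    refine (card_le_card (t := {π (ends e).1, π (ends e).2}) fun x hx => ?_).trans card_le_two
    simp only [mem_bipartiteBelow, cutEdges, mem_filter, mem_univ, true_and, fiber] at hx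
    simp only [mem_insert, mem_singleton]
    tauto

noncomputable def nearMinCuts [Fintype V] [Fintype E] [DecidableEq V] (ends : E → V × V) (v₀ : V)
    (t : ℝ) : Finset (Finset V) :=
  univ.filter fun S => v₀ ∈ S ∧ S ≠ univ ∧ (#(cutEdges ends S) : ℝ) ≤ t

lemma of_mem_nearMinCuts_filter [Fintype V] [Fintype E] [DecidableEq V] {ends : E → V × V}
    {v₀ : V} {t : ℝ} {π : V → ι} {S : Finset V}
    (hS : S ∈ (nearMinCuts ends v₀ t).filter (IsSaturated π)) :
    v₀ ∈ S ∧ (#(cutEdges ends S) : ℝ) ≤ t ∧ IsSaturated π S := by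
  simp only [nearMinCuts, mem_filter, mem_univ, true_and] at hS
  exact ⟨hS.1.1, hS.1.2.2, hS.2⟩

lemma card_nearMinCuts_filter_isSaturated_le_two_pow [Fintype V] [Fintype E] [DecidableEq V]
    [DecidableEq ι] (ends : E → V × V) (v₀ : V) (t : ℝ) (π : V → ι) :
    #((nearMinCuts ends v₀ t).filter (IsSaturated π)) ≤ 2 ^ (#(univ.image π) - 1) :=
  card_filter_isSaturated_le_two_pow π v₀ _ fun _ hS =>
    ⟨(of_mem_nearMinCuts_filter hS).1, (of_mem_nearMinCuts_filter hS).2.2⟩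

lemma card_nearMinCuts_filter_isSaturated_mul_le [Fintype V] [Fintype E] [DecidableEq V]
    [DecidableEq ι] (ends : E → V × V) (v₀ : V) (t : ℝ) (π : V → ι) {g : ℝ}
    (hg : ∀ e ∈ crossingEdges ends π,
      (#((nearMinCuts ends v₀ t).filter (IsSaturated (contract π (ends e).1 (ends e).2))) : ℝ) ≤
        g) :
    (#((nearMinCuts ends v₀ t).filter (IsSaturated π)) : ℝ) * (#(crossingEdges ends π) - t) ≤
      #(crossingEdges ends π) * g := by
  set A := (nearMinCuts ends v₀ t).filter (IsSaturated π)
  set Cr := crossingEdges ends π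
  have hcross : ∀ S ∈ A, (#Cr : ℝ) - t ≤ #(Cr.filter fun e => e ∉ cutEdges ends S) := by
    intro S hS
    obtain ⟨-, hcut, hsat⟩ := of_mem_nearMinCuts_filter hS
    have hsplit := card_filter_add_card_filter_not (s := Cr) (fun e => e ∈ cutEdges ends S)
    rw [filter_mem_eq_inter, inter_eq_right.2 (hsat.cutEdges_subset ends)] at hsplit
    have : (#(cutEdges ends S) : ℝ) + #(Cr.filter fun e => e ∉ cutEdges ends S) = #Cr := by
      exact_mod_cast hsplit
    linarith
  have hsurvive : ∀ e ∈ Cr, (#(A.filter fun S => e ∉ cutEdges ends S) : ℝ) ≤ g := by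
    intro e he
    refine le_trans (Nat.cast_le.2 (card_le_card fun S hS => ?_)) (hg e he)
    obtain ⟨hSA, heS⟩ := mem_filter.1 hS
    exact mem_filter.2 ⟨(mem_filter.1 hSA).1,
      (mem_filter.1 hSA).2.contract ((notMem_cutEdges_iff ends S e).1 heS)⟩
  simpa only [nsmul_eq_mul] using
    card_nsmul_le_card_nsmul (fun S e => e ∉ cutEdges ends S) hcross hsurvive

end Contraction

noncomputable def cutBound (r : ℕ) (γ : ℝ) (k : ℕ) : ℝ :=
  2 ^ (r - 1) * k.choose r / ((k - r + 1 : ℕ) : ℝ) ^ γ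

lemma cutBound_self (r : ℕ) (γ : ℝ) : cutBound r γ r = 2 ^ (r - 1) := by
  simp [cutBound]

lemma cutBound_nonneg (r : ℕ) (γ : ℝ) (k : ℕ) : 0 ≤ cutBound r γ k := by
  unfold cutBound
  positivity

lemma le_cutBound_of_mul_le {r k : ℕ} {γ T : ℝ} (hrk : r < k) (hγ0 : 0 ≤ γ) (hγ1 : γ ≤ 1)
    (h : T * (k - (r - γ)) ≤ cutBound r γ (k - 1) * k) : T ≤ cutBound r γ k := by
  obtain ⟨x, rfl⟩ : ∃ x, k = r + x + 1 := ⟨k - r - 1, by omega⟩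
  set B : ℝ := 2 ^ (r - 1) * (r + x + 1).choose r
  have hx : (0 : ℝ) < x + 1 := by positivity
  have hchoose : ((r + x).choose r : ℝ) * (r + x + 1) = (r + x + 1).choose r * (x + 1) := by
    have := Nat.choose_mul_succ_eq (r + x) r
    rw [show r + x + 1 - r = x + 1 by omega] at this
    exact_mod_cast this
  have hrec : cutBound r γ (r + x + 1 - 1) * ↑(r + x + 1) = B * ((x : ℝ) + 1) ^ (1 - γ) := by
    rw [show r + x + 1 - 1 = r + x by omega, cutBound, show r + x - r + 1 = x + 1 by omega,
      Real.rpow_sub hx, Real.rpow_one]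
    push_cast
    rw [div_mul_eq_mul_div, mul_assoc, hchoose]
    ring
  have hamgm : ((x : ℝ) + 1) ^ (1 - γ) * ((x : ℝ) + 2) ^ γ ≤ x + 1 + γ := by
    have := Real.geom_mean_le_arith_mean2_weighted (by linarith) hγ0 hx.le
      (by positivity : (0 : ℝ) ≤ x + 2) (sub_add_cancel 1 γ)
    linarith
  have h' : T * (x + 1 + γ) ≤ B * ((x : ℝ) + 1) ^ (1 - γ) := by
    rw [← hrec]
    convert h using 2
    push_cast
    ring
  rw [cutBound, show r + x + 1 - r + 1 = x + 2 by omega, le_div_iff₀ (by positivity)]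
  refine le_of_mul_le_mul_right ?_ (by linarith : (0 : ℝ) < x + 1 + γ)
  push_cast
  calc T * ((x : ℝ) + 2) ^ γ * (x + 1 + γ) = T * (x + 1 + γ) * ((x : ℝ) + 2) ^ γ := by ring
    _ ≤ B * ((x : ℝ) + 1) ^ (1 - γ) * ((x : ℝ) + 2) ^ γ := by gcongr
    _ ≤ B * (x + 1 + γ) := by
      rw [mul_assoc]
      exact mul_le_mul_of_nonneg_left hamgm (by positivity)

lemma two_pow_pred_mul_choose_le (n : ℕ) {r : ℕ} (hr : 1 ≤ r) :
    2 ^ (r - 1) * n.choose r ≤ n ^ (r - 1) * (n - r + 1) := by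
  obtain ⟨j, rfl⟩ : ∃ j, r = j + 1 := ⟨r - 1, by omega⟩
  have h2 : 2 ^ j ≤ (j + 1).factorial := by
    simpa [add_comm] using Nat.factorial_mul_pow_le_factorial (m := 1) (n := j)
  calc 2 ^ (j + 1 - 1) * n.choose (j + 1) ≤ (j + 1).factorial * n.choose (j + 1) := by
        simpa using Nat.mul_le_mul_right _ h2
    _ = (n - j) * n.descFactorial j := by
        rw [← Nat.descFactorial_eq_factorial_mul_choose, Nat.descFactorial_succ]
    _ ≤ (n - (j + 1) + 1) * n ^ j := Nat.mul_le_mul (by omega) (Nat.descFactorial_le_pow n j)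
    _ = n ^ (j + 1 - 1) * (n - (j + 1) + 1) := by simp [mul_comm]

lemma cutBound_le_rpow {r n : ℕ} {γ : ℝ} (hr : 1 ≤ r) (hrn : r ≤ n) (hγ1 : γ ≤ 1) :
    cutBound r γ n ≤ (n : ℝ) ^ ((r : ℝ) - γ) := by
  set x : ℝ := ((n - r + 1 : ℕ) : ℝ)
  have hx : 0 < x := by positivity
  have hn : (0 : ℝ) < n := by exact_mod_cast (by omega : 0 < n)
  have hxn : x ≤ n := by
    simp only [x]
    exact_mod_cast (by omega : n - r + 1 ≤ n)
  have hcount : (2 : ℝ) ^ (r - 1) * n.choose r ≤ (n : ℝ) ^ (r - 1) * x := by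
    simp only [x]
    exact_mod_cast two_pow_pred_mul_choose_le n hr
  calc cutBound r γ n ≤ (n : ℝ) ^ (r - 1) * x / x ^ γ := by
        unfold cutBound
        gcongr
    _ = (n : ℝ) ^ (r - 1) * x ^ (1 - γ) := by
        rw [Real.rpow_sub hx, Real.rpow_one, mul_div_assoc]
    _ ≤ (n : ℝ) ^ (r - 1) * (n : ℝ) ^ (1 - γ) := by gcongr
    _ = (n : ℝ) ^ ((r : ℝ) - γ) := by
        rw [← Real.rpow_natCast, ← Real.rpow_add hn]
        push_cast [hr]
        ring_nf

lemma two_pow_pred_le_rpow {n : ℕ} {β : ℝ} (hn : 1 ≤ n) (hβ : (n : ℝ) - 1 ≤ β) :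
    (2 : ℝ) ^ (n - 1) ≤ (n : ℝ) ^ β := by
  have hpow : 2 ^ (n - 1) ≤ n ^ (n - 1) := by
    rcases hn.eq_or_lt with rfl | h
    · simp
    · exact Nat.pow_le_pow_left h _
  calc (2 : ℝ) ^ (n - 1) ≤ (n : ℝ) ^ (n - 1) := by exact_mod_cast hpow
    _ = (n : ℝ) ^ ((n - 1 : ℕ) : ℝ) := (Real.rpow_natCast _ _).symm
    _ ≤ (n : ℝ) ^ β :=
        Real.rpow_le_rpow_of_exponent_le (by exact_mod_cast hn) (by push_cast [hn]; linarith)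

theorem card_nearMinCuts_filter_isSaturated_le_cutBound {V E ι : Type} [Fintype V] [Fintype E]
    [DecidableEq V] [DecidableEq ι] (ends : E → V × V) {c : ℕ} (hc : 0 < c)
    (hmin : ∀ S : Finset V, S.Nonempty → S ≠ univ → c ≤ #(cutEdges ends S))
    (v₀ : V) {α γ : ℝ} {r : ℕ} (hα : 0 ≤ α) (hr : 1 ≤ r) (hγ0 : 0 ≤ γ) (hγ1 : γ ≤ 1)
    (hαr : 2 * α ≤ r - γ) (π : V → ι) (hrπ : r ≤ #(univ.image π)) :
    (#((nearMinCuts ends v₀ (α * c)).filter (IsSaturated π)) : ℝ) ≤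
      cutBound r γ #(univ.image π) := by
  induction hk : #(univ.image π) using Nat.strong_induction_on generalizing π with
  | _ k ih =>
  subst hk
  rcases hrπ.eq_or_lt with hrk | hrk
  · have := card_nearMinCuts_filter_isSaturated_le_two_pow ends v₀ (α * c) π
    rw [← hrk] at this ⊢
    rw [cutBound_self]
    exact_mod_cast this
  set Cr := crossingEdges ends π
  have hdouble := card_nearMinCuts_filter_isSaturated_mul_le ends v₀ (α * c) π fun e he => by
    have hcard := card_image_contract (mem_filter.1 he).2
    exact ih _ (by omega) _ (by omega) hcard
  have hparts : (#(univ.image π) : ℝ) * c ≤ #Cr * 2 := by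
    exact_mod_cast card_image_mul_le_card_crossingEdges_mul_two ends hmin π (by omega)
  refine le_cutBound_of_mul_le hrk hγ0 hγ1 ?_
  have hk : (r : ℝ) < #(univ.image π) := by exact_mod_cast hrk
  have hc' : (0 : ℝ) < c := by exact_mod_cast hc
  have hm : 0 < (#Cr : ℝ) - α * c := by nlinarith
  refine le_of_mul_le_mul_right ?_ hm
  -- `#Cr ≥ k c / 2` bounds `#Cr / (#Cr - α c)` by `k / (k - 2α)`.
  linarith [mul_le_mul_of_nonneg_right hdouble (by linarith : (0 : ℝ) ≤ #(univ.image π) - 2 * α),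
    mul_nonneg (mul_nonneg (cutBound_nonneg r γ (#(univ.image π) - 1)) hα)
      (by linarith : (0 : ℝ) ≤ #Cr * 2 - #(univ.image π) * c),
    mul_nonneg (mul_nonneg (Nat.cast_nonneg _ : (0 : ℝ) ≤
      #((nearMinCuts ends v₀ (α * c)).filter (IsSaturated π))) hm.le)
      (by linarith : (0 : ℝ) ≤ r - γ - 2 * α)]

/-- Each cut `{S, Sᶜ}` is counted once, through its side `S` containing `v₀`. -/
theorem karger_cut_counting
    (V E : Type) [Fintype V] [Fintype E] [DecidableEq V]
    (ends : E → V × V) (c : ℕ) (α : ℝ) (hc : 0 < c) (hα : 1 ≤ α)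
    (hmin : ∀ S : Finset V, S.Nonempty → S ≠ Finset.univ → c ≤ (cutEdges ends S).card)
    (v₀ : V) :
    (((Finset.univ : Finset (Finset V)).filter (fun S =>
        v₀ ∈ S ∧ S ≠ Finset.univ ∧ ((cutEdges ends S).card : ℝ) ≤ α * c)).card : ℝ)
      ≤ (Fintype.card V : ℝ) ^ (2 * α) := by
  set n := Fintype.card V
  have hn : 1 ≤ n := Fintype.card_pos_iff.2 ⟨v₀⟩
  have himage : #(univ.image (id : V → V)) = n := by simp [n]
  have hcuts :
      (nearMinCuts ends v₀ (α * c)).filter (IsSaturated id) = nearMinCuts ends v₀ (α * c) :=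
    filter_true_of_mem fun S _ => isSaturated_id S
  change (#(nearMinCuts ends v₀ (α * c)) : ℝ) ≤ _
  rw [← hcuts]
  set r := ⌈2 * α⌉₊
  have hr : 2 * α ≤ r := Nat.le_ceil _
  have hr' : (r : ℝ) < 2 * α + 1 := Nat.ceil_lt_add_one (by linarith)
  have hr1 : 1 ≤ r := by exact_mod_cast (by linarith : (1 : ℝ) ≤ r)
  rcases le_or_gt r n with hrn | hnr
  · calc _ ≤ cutBound r (r - 2 * α) n := himage ▸ card_nearMinCuts_filter_isSaturated_le_cutBound
          ends hc hmin v₀ (by linarith) hr1 (by linarith) (by linarith) (by linarith) id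
          (himage ▸ hrn)
      _ ≤ (n : ℝ) ^ (2 * α) := by
          simpa using cutBound_le_rpow hr1 hrn (by linarith : (r : ℝ) - 2 * α ≤ 1)
  · have hnr' : (n : ℝ) + 1 ≤ r := by exact_mod_cast hnr
    calc _ ≤ (2 : ℝ) ^ (n - 1) := by
          have := card_nearMinCuts_filter_isSaturated_le_two_pow ends v₀ (α * c) (id : V → V)
          rw [himage] at this
          exact_mod_cast this
      _ ≤ (n : ℝ) ^ (2 * α) := two_pow_pred_le_rpow hn (by linarith)
end
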